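/- Let s be a weak composition and T an s-decreasing tree. The multi inversion set Q defined by card_Q(c,a) = min{card_T(c,b) : a ≤ b < c} is an s-tree-inversion set; the corresponding s-decreasing tree π↓(T) is an s-Tamari tree and satisfies π↓(T) ≼ T in the s-weak order. Moreover, π↓ is idempotent, and π↓(T) = T when T is an s-Tamari tree. -/
import Mathlib


/-- Planar rooted trees: leaves are unlabeled; internal nodes carry a natural
number label and an ordered list of children. -/
inductive STree : Type where
  | leaf : STree
  | node : ℕ → List STree → STree

namespace STree

mutual
  /-- `x` occurs as the label of an internal node of the tree. -/
  def mem (x : ℕ) : STree → Bool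
    | .leaf => false
    | .node a cs => x == a || memL x cs
  def memL (x : ℕ) : List STree → Bool
    | [] => false
    | t :: ts => mem x t || memL x ts
end

mutual
  /-- The list of internal node labels, in preorder. -/
  def labels : STree → List ℕ
    | .leaf => []
    | .node a cs => a :: labelsL cs
  def labelsL : List STree → List ℕ
    | [] => []
    | t :: ts => labels t ++ labelsL ts
end

mutual
  /-- Local well-formedness for the signature `s` : an internal node labeled `a`
  has `s a + 1` children, and all labels below it are smaller than `a`. -/
  def wf (s : ℕ → ℕ) : STree → Prop
    | .leaf => True
    | .node a cs => cs.length = s a + 1 ∧ (∀ b ∈ labelsL cs, b < a) ∧ wfL s cs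
  def wfL (s : ℕ → ℕ) : List STree → Prop
    | [] => True
    | t :: ts => wf s t ∧ wfL s ts
end

/-- `T` is an `s`-decreasing tree: its internal nodes are labeled bijectively by
`1, …, n`, node `i` has `s i + 1` ordered children, and all descendants of a node
have smaller labels. -/
def IsSDecreasingTree (n : ℕ) (s : ℕ → ℕ) (T : STree) : Prop :=
  wf s T ∧ (labels T).Perm (List.range' 1 n)

/-- Index of the first tree of the list containing the label `x`. -/
def idxOf (x : ℕ) : List STree → ℕ
  | [] => 0
  | t :: ts => if mem x t then 0 else idxOf x ts + 1

mutual
  /-- The cardinality `card_T(y,x)` of the pair `(y,x)` in the tree: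
  `0` if `x` is (weakly) left of `y`, `i` if `x` lies in the `i`-th child
  subtree of `y`, and `s y` if `x` is right of `y`. -/
  def card (s : ℕ → ℕ) (y x : ℕ) : STree → ℕ
    | .leaf => 0
    | .node a cs => if a = y then idxOf x cs else cardL s y x cs
  def cardL (s : ℕ → ℕ) (y x : ℕ) : List STree → ℕ
    | [] => 0
    | t :: ts =>
      if mem y t then
        (if mem x t then card s y x t else if memL x ts then s y else 0)
      else (if mem x t then 0 else cardL s y x ts)
end

/-- The tree-inversion multiset of `T`, as a multiplicity function on pairs
`(y,x)` with `1 ≤ x < y ≤ n`. -/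
def treeInv (n : ℕ) (s : ℕ → ℕ) (T : STree) : ℕ → ℕ → ℕ := fun y x =>
  if 1 ≤ x ∧ x < y ∧ y ≤ n then card s y x T else 0

/-- A multi inversion set on `1, …, n` bounded by the weak composition `s`. -/
def IsMultiInvSet (n : ℕ) (s : ℕ → ℕ) (I : ℕ → ℕ → ℕ) : Prop :=
  (∀ y x, I y x ≤ s y) ∧ ∀ y x, ¬(1 ≤ x ∧ x < y ∧ y ≤ n) → I y x = 0

/-- Transitivity: for `a < b < c`, `card(c,b) = i` implies `card(b,a) = 0` or
`card(c,a) ≥ i`. -/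
def InvTransitive (I : ℕ → ℕ → ℕ) : Prop :=
  ∀ a b c : ℕ, a < b → b < c → I b a = 0 ∨ I c b ≤ I c a

/-- Planarity: for `a < b < c`, `card(c,a) = i` implies `card(b,a) = s b` or
`card(c,b) ≥ i`. -/
def InvPlanar (s : ℕ → ℕ) (I : ℕ → ℕ → ℕ) : Prop :=
  ∀ a b c : ℕ, a < b → b < c → I b a = s b ∨ I c a ≤ I c b

/-- An `s`-tree-inversion set: a bounded multi inversion set that is transitive
and planar. -/
def IsTreeInvSet (n : ℕ) (s : ℕ → ℕ) (I : ℕ → ℕ → ℕ) : Prop :=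
  IsMultiInvSet n s I ∧ InvTransitive I ∧ InvPlanar s I

/-- Inclusion of multi inversion sets: pointwise comparison of multiplicities. -/
def invLE (I J : ℕ → ℕ → ℕ) : Prop := ∀ y x, I y x ≤ J y x

/-- The `s`-weak order: inclusion of tree-inversion multisets. -/
def sWeakLE (n : ℕ) (s : ℕ → ℕ) (T R : STree) : Prop :=
  invLE (treeInv n s T) (treeInv n s R)

/-- Union of multi inversion sets: pointwise maximum. -/
def invUnion (I J : ℕ → ℕ → ℕ) : ℕ → ℕ → ℕ := fun y x => max (I y x) (J y x)

/-- Transitive closure: `tc I (c,a)` is the maximal value of `I (b₁, b₂)` over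
all transitivity paths `c = b₁ > b₂ > … > b_k = a` (consecutive entries have
positive multiplicity). -/
noncomputable def tc (I : ℕ → ℕ → ℕ) : ℕ → ℕ → ℕ := fun c a =>
  sSup {v | ∃ (b : ℕ) (l : List ℕ),
    List.Chain (fun u w => w < u ∧ 0 < I u w) c (b :: l) ∧
    (b :: l).getLast (List.cons_ne_nil b l) = a ∧ v = I c b}

/-- Adding the inversion `(c,a)`: increase its multiplicity by one. -/
def addInv (I : ℕ → ℕ → ℕ) (c a : ℕ) : ℕ → ℕ → ℕ := fun y x =>
  if y = c ∧ x = a then I y x + 1 else I y x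

mutual
  /-- `a` is a (proper) descendant of the node labeled `c`. -/
  def descIn (c a : ℕ) : STree → Bool
    | .leaf => false
    | .node b cs => (b == c && memL a cs) || descInL c a cs
  def descInL (c a : ℕ) : List STree → Bool
    | [] => false
    | t :: ts => descIn c a t || descInL c a ts
end

mutual
  /-- `a` belongs to the rightmost child subtree of the node labeled `c`. -/
  def inRight (c a : ℕ) : STree → Bool
    | .leaf => false
    | .node b cs =>
      (b == c && (match cs.getLast? with
        | some t => mem a t
        | none => false)) || inRightL c a cs
  def inRightL (c a : ℕ) : List STree → Bool
    | [] => false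
    | t :: ts => inRight c a t || inRightL c a ts
end

mutual
  /-- `a` belongs to the leftmost child subtree of the node labeled `c`. -/
  def inLeft (c a : ℕ) : STree → Bool
    | .leaf => false
    | .node b cs =>
      (b == c && (match cs.head? with
        | some t => mem a t
        | none => false)) || inLeftL c a cs
  def inLeftL (c a : ℕ) : List STree → Bool
    | [] => false
    | t :: ts => inLeft c a t || inLeftL c a ts
end

mutual
  /-- The rightmost child subtree of the node labeled `a` is empty (a leaf). -/
  def rightEmpty (a : ℕ) : STree → Bool
    | .leaf => false
    | .node b cs =>
      (b == a && (match cs.getLast? with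
        | some .leaf => true
        | _ => false)) || rightEmptyL a cs
  def rightEmptyL (a : ℕ) : List STree → Bool
    | [] => false
    | t :: ts => rightEmpty a t || rightEmptyL a ts
end

/-- `(a,c)` is a tree-ascent of `T`: `a` is a descendant of `c`, not in the
rightmost subtree of `c`; `a` lies in the rightmost subtree of any `b` with
`a < b < c` having `a` as a descendant; and if `s a > 0` the rightmost
(strict right) subtree of `a` is empty. -/
def IsTreeAscent (s : ℕ → ℕ) (T : STree) (a c : ℕ) : Prop :=
  a < c ∧ descIn c a T = true ∧ inRight c a T = false ∧
  (∀ b : ℕ, a < b → b < c → descIn b a T = true → inRight b a T = true) ∧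
  (0 < s a → rightEmpty a T = true)

/-- `a` is the root label of the tree. -/
def hasRoot (a : ℕ) : STree → Bool
  | .leaf => false
  | .node b _ => a == b

mutual
  /-- `a` is a direct child of the node `c`, but not its rightmost child. -/
  def nonRightChild (c a : ℕ) : STree → Bool
    | .leaf => false
    | .node b cs => (b == c && cs.dropLast.any (hasRoot a)) || nonRightChildL c a cs
  def nonRightChildL (c a : ℕ) : List STree → Bool
    | [] => false
    | t :: ts => nonRightChild c a t || nonRightChildL c a ts
end

/-- `(a,c)` is a Tamari-ascent of `T`: `a` is a non-right child of `c`. -/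
def IsTamariAscent (T : STree) (a c : ℕ) : Prop :=
  a < c ∧ nonRightChild c a T = true

mutual
  /-- Horizontal mirror image of a tree: the order of children is reversed at
  every internal node. -/
  def mirror : STree → STree
    | .leaf => .leaf
    | .node a cs => .node a (mirrorL cs)
  def mirrorL : List STree → List STree
    | [] => []
    | t :: ts => mirrorL ts ++ [mirror t]
end

/-- `T` is an `s`-Tamari tree: `card(c,a) ≤ card(c,b)` for all `a < b < c`. -/
def TamariProp (n : ℕ) (s : ℕ → ℕ) (T : STree) : Prop :=
  ∀ a b c : ℕ, a < b → b < c → treeInv n s T c a ≤ treeInv n s T c b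

/-- `T` is an `s`-maximal-Tamari tree: `card(b,a) = s b` implies
`card(c,a) = s c` for all `c > b`. -/
def MaxTamariProp (n : ℕ) (s : ℕ → ℕ) (T : STree) : Prop :=
  ∀ a b c : ℕ, 1 ≤ a → a < b → b < c → c ≤ n →
    treeInv n s T b a = s b → treeInv n s T c a = s c

/-- The projection `π↓` on inversion sets:
`card_Q(c,a) = min { card_T(c,b) : a ≤ b < c }`. -/
noncomputable def pidownInv (n : ℕ) (s : ℕ → ℕ) (T : STree) : ℕ → ℕ → ℕ :=
  fun c a => sInf {v | ∃ b : ℕ, a ≤ b ∧ b < c ∧ v = treeInv n s T c b}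

open scoped Classical in
/-- The projection `π↑` on inversion sets: `card_R(c,a) = s c` if there is
`a < b < c` with `card_T(b,a) = s b`, and `card_R(c,a) = card_T(c,a)` otherwise. -/
noncomputable def piupInv (n : ℕ) (s : ℕ → ℕ) (T : STree) : ℕ → ℕ → ℕ :=
  fun c a =>
    if 1 ≤ a ∧ a < c ∧ c ≤ n then
      if ∃ b : ℕ, a < b ∧ b < c ∧ treeInv n s T b a = s b then s c
      else treeInv n s T c a
    else 0

end STree


namespace STree

theorem idxOf_lt_length {x : ℕ} : ∀ {cs : List STree}, memL x cs = true → idxOf x cs < cs.length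
  | t :: ts, h => by
    rw [idxOf]
    split
    · simp
    · rename_i hm
      have h' : memL x ts = true := by rw [memL] at h; simpa [hm] using h
      simpa using idxOf_lt_length h'

mutual
theorem mem_iff (x : ℕ) : ∀ (T : STree), (mem x T = true ↔ x ∈ labels T)
  | .leaf => by simp [mem, labels]
  | .node a cs => by simp [mem, labels, memL_iff x cs]
theorem memL_iff (x : ℕ) : ∀ (ts : List STree), (memL x ts = true ↔ x ∈ labelsL ts)
  | [] => by simp [memL, labelsL]
  | t :: ts => by simp [memL, labelsL, mem_iff x t, memL_iff x ts]
end

theorem idxOf_le_of_cardL_pos {s : ℕ → ℕ} {b a : ℕ} :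
    ∀ {cs : List STree}, 0 < cardL s b a cs → idxOf b cs ≤ idxOf a cs
  | [], h => by rw [cardL] at h; omega
  | t :: ts, h => by
    by_cases hb : mem b t
    · simp [idxOf, hb]
    · by_cases ha : mem a t
      · rw [cardL] at h; simp [hb, ha] at h
      · rw [cardL] at h
        simp [hb, ha] at h
        simp only [idxOf]
        rw [if_neg hb, if_neg ha]
        have := idxOf_le_of_cardL_pos h
        omega

mutual
theorem card_le {s : ℕ → ℕ} {y x : ℕ} :
    ∀ {T : STree}, wf s T → mem y T = true → mem x T = true → x ≠ y →
      card s y x T ≤ s y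
  | .leaf, _, hy, _, _ => by rw [mem] at hy; exact absurd hy (by simp)
  | .node r cs, hw, hy, hx, hxy => by
    rw [card]
    simp only [wf] at hw
    split
    · rename_i hr
      subst hr
      have hx' : memL x cs = true := by
        rw [mem, Bool.or_eq_true, beq_iff_eq] at hx
        rcases hx with h | h
        · exact absurd h hxy
        · exact h
      have := idxOf_lt_length hx'
      omega
    · rename_i hr
      have hy' : memL y cs = true := by
        rw [mem, Bool.or_eq_true, beq_iff_eq] at hy
        rcases hy with h | h
        · exact absurd h.symm hr
        · exact h
      exact cardL_le hw.2.2 hy' hxy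
theorem cardL_le {s : ℕ → ℕ} {y x : ℕ} :
    ∀ {cs : List STree}, wfL s cs → memL y cs = true → x ≠ y →
      cardL s y x cs ≤ s y
  | t :: ts, hw, hy, hxy => by
    rw [cardL]
    simp only [wfL] at hw
    by_cases hyt : mem y t = true
    · rw [if_pos hyt]
      by_cases hxt : mem x t = true
      · rw [if_pos hxt]
        exact card_le hw.1 hyt hxt hxy
      · rw [if_neg hxt]
        split <;> omega
    · have hy' : memL y ts = true := by rw [memL] at hy; simpa [hyt] using hy
      rw [if_neg hyt]
      split
      · omega
      · exact cardL_le hw.2 hy' hxy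
end

theorem cardL_cons_pp {s : ℕ → ℕ} {y x : ℕ} {t : STree} {ts : List STree}
    (hy : mem y t = true) (hx : mem x t = true) :
    cardL s y x (t :: ts) = card s y x t := by
  rw [cardL, if_pos hy, if_pos hx]

theorem cardL_cons_pn {s : ℕ → ℕ} {y x : ℕ} {t : STree} {ts : List STree}
    (hy : mem y t = true) (hx : ¬ mem x t = true) :
    cardL s y x (t :: ts) = if memL x ts = true then s y else 0 := by
  rw [cardL, if_pos hy, if_neg hx]

theorem cardL_cons_np {s : ℕ → ℕ} {y x : ℕ} {t : STree} {ts : List STree}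
    (hy : ¬ mem y t = true) (hx : mem x t = true) :
    cardL s y x (t :: ts) = 0 := by
  rw [cardL, if_neg hy, if_pos hx]

theorem cardL_cons_nn {s : ℕ → ℕ} {y x : ℕ} {t : STree} {ts : List STree}
    (hy : ¬ mem y t = true) (hx : ¬ mem x t = true) :
    cardL s y x (t :: ts) = cardL s y x ts := by
  rw [cardL, if_neg hy, if_neg hx]

mutual
theorem card_trans {s : ℕ → ℕ} {a b c : ℕ} :
    ∀ {T : STree}, wf s T → mem a T = true → mem b T = true → mem c T = true →
      a < b → b < c → card s b a T = 0 ∨ card s c b T ≤ card s c a T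
  | .leaf, _, ha, _, _, _, _ => by rw [mem] at ha; exact absurd ha (by simp)
  | .node r cs, hw, ha, hb, hc, hab, hbc => by
    simp only [wf] at hw
    have memL_of : ∀ {x : ℕ}, mem x (STree.node r cs) = true → x ≠ r → memL x cs = true := by
      intro x hx hne
      rw [mem, Bool.or_eq_true, beq_iff_eq] at hx
      rcases hx with h | h
      · exact absurd h hne
      · exact h
    by_cases hrc : r = c
    · subst hrc
      by_cases h0 : cardL s b a cs = 0
      · left; rw [card, if_neg (by omega : ¬ r = b)]; exact h0
      · right
        rw [card, if_pos rfl, card, if_pos rfl]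
        exact idxOf_le_of_cardL_pos (Nat.pos_of_ne_zero h0)
    · by_cases hrb : r = b
      · exfalso
        have hc' : memL c cs = true := memL_of hc (by omega)
        have := hw.2.1 c ((memL_iff c cs).mp hc')
        omega
      · by_cases hra : r = a
        · exfalso
          have hb' : memL b cs = true := memL_of hb (by omega)
          have := hw.2.1 b ((memL_iff b cs).mp hb')
          omega
        · rw [card, if_neg hrb, card, if_neg hrc, card, if_neg hrc]
          exact cardL_trans hw.2.2 (memL_of ha (fun h => hra h.symm))
            (memL_of hb (fun h => hrb h.symm)) (memL_of hc (fun h => hrc h.symm)) hab hbc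
theorem cardL_trans {s : ℕ → ℕ} {a b c : ℕ} :
    ∀ {cs : List STree}, wfL s cs → memL a cs = true → memL b cs = true →
      memL c cs = true → a < b → b < c →
      cardL s b a cs = 0 ∨ cardL s c b cs ≤ cardL s c a cs
  | [], _, ha, _, _, _, _ => by rw [memL] at ha; exact absurd ha (by simp)
  | t :: ts, hw, ha, hb, hc, hab, hbc => by
    simp only [wfL] at hw
    rw [memL] at ha hb hc
    by_cases hct : mem c t = true
    · by_cases hbt : mem b t = true
      · by_cases hat : mem a t = true
        · rw [cardL_cons_pp hbt hat, cardL_cons_pp hct hbt, cardL_cons_pp hct hat]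
          exact card_trans hw.1 hat hbt hct hab hbc
        · have hats : memL a ts = true := by simpa [hat] using ha
          right
          rw [cardL_cons_pp hct hbt, cardL_cons_pn hct hat, if_pos hats]
          exact card_le hw.1 hct hbt (by omega)
      · by_cases hat : mem a t = true
        · left
          exact cardL_cons_np hbt hat
        · have hats : memL a ts = true := by simpa [hat] using ha
          have hbts : memL b ts = true := by simpa [hbt] using hb
          right
          rw [cardL_cons_pn hct hbt, if_pos hbts, cardL_cons_pn hct hat, if_pos hats]
    · by_cases hbt : mem b t = true
      · right
        rw [cardL_cons_np hct hbt]
        omega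
      · by_cases hat : mem a t = true
        · left
          exact cardL_cons_np hbt hat
        · have hats : memL a ts = true := by simpa [hat] using ha
          have hbts : memL b ts = true := by simpa [hbt] using hb
          have hcts : memL c ts = true := by simpa [hct] using hc
          rw [cardL_cons_nn hbt hat, cardL_cons_nn hct hbt, cardL_cons_nn hct hat]
          exact cardL_trans hw.2 hats hbts hcts hab hbc
end

theorem mem_of_range {n : ℕ} {s : ℕ → ℕ} {T : STree} (hT : IsSDecreasingTree n s T)
    {x : ℕ} (h1 : 1 ≤ x) (h2 : x ≤ n) : mem x T = true := by
  rw [mem_iff, hT.2.mem_iff, List.mem_range'_1]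
  omega

theorem treeInv_le_s {n : ℕ} {s : ℕ → ℕ} {T : STree} (hT : IsSDecreasingTree n s T)
    (y x : ℕ) : treeInv n s T y x ≤ s y := by
  rw [treeInv]
  split
  · rename_i h
    exact card_le hT.1 (mem_of_range hT (by omega) (by omega))
      (mem_of_range hT h.1 (by omega)) (by omega)
  · omega

theorem treeInv_trans {n : ℕ} {s : ℕ → ℕ} {T : STree} (hT : IsSDecreasingTree n s T) :
    InvTransitive (treeInv n s T) := by
  intro a b c hab hbc
  by_cases h1 : 1 ≤ a
  · by_cases hn : c ≤ n
    · have e1 : treeInv n s T b a = card s b a T := if_pos ⟨h1, hab, by omega⟩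
      have e2 : treeInv n s T c b = card s c b T := if_pos ⟨by omega, hbc, hn⟩
      have e3 : treeInv n s T c a = card s c a T := if_pos ⟨h1, by omega, hn⟩
      rw [e1, e2, e3]
      exact card_trans hT.1 (mem_of_range hT h1 (by omega))
        (mem_of_range hT (by omega) (by omega)) (mem_of_range hT (by omega) hn) hab hbc
    · right
      have e2 : treeInv n s T c b = 0 := if_neg (fun h => hn h.2.2)
      rw [e2]; omega
  · left
    exact if_neg (fun h => h1 h.1)

theorem pidown_le {n : ℕ} {s : ℕ → ℕ} {T : STree} {c a b : ℕ} (h1 : a ≤ b) (h2 : b < c) :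
    pidownInv n s T c a ≤ treeInv n s T c b :=
  Nat.sInf_le ⟨b, h1, h2, rfl⟩

theorem pidown_spec {n : ℕ} {s : ℕ → ℕ} {T : STree} {c a : ℕ} (h : a < c) :
    ∃ b, a ≤ b ∧ b < c ∧ pidownInv n s T c a = treeInv n s T c b := by
  have hne : {v | ∃ b : ℕ, a ≤ b ∧ b < c ∧ v = treeInv n s T c b}.Nonempty :=
    ⟨treeInv n s T c a, a, le_rfl, h, rfl⟩
  obtain ⟨b, h1, h2, h3⟩ := Nat.sInf_mem hne
  exact ⟨b, h1, h2, h3⟩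

theorem pidown_zero {n : ℕ} {s : ℕ → ℕ} {T : STree} {c a : ℕ} (h : ¬ a < c) :
    pidownInv n s T c a = 0 := by
  have he : {v | ∃ b : ℕ, a ≤ b ∧ b < c ∧ v = treeInv n s T c b} = ∅ := by
    ext v
    simp only [Set.mem_setOf_eq, Set.mem_empty_iff_false, iff_false]
    rintro ⟨b, h1, h2, _⟩
    omega
  show sInf _ = 0
  rw [he]
  exact Nat.sInf_empty

theorem pidown_mono {n : ℕ} {s : ℕ → ℕ} {T : STree} {c a b : ℕ} (hab : a ≤ b) (hbc : b < c) :
    pidownInv n s T c a ≤ pidownInv n s T c b := by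
  obtain ⟨b', h1, h2, h3⟩ := pidown_spec (T := T) (n := n) (s := s) hbc
  rw [h3]
  exact pidown_le (hab.trans h1) h2

end STree


open STree in
/-- The projection `π↓`: for any `s`-decreasing tree `T`, the multi inversion
set `card_Q(c,a) = min { card_T(c,b) : a ≤ b < c }` is an `s`-tree-inversion
set; the corresponding tree is an `s`-Tamari tree below `T` in the `s`-weak
order; `π↓` is idempotent, and fixes `s`-Tamari trees. -/
theorem pidown_projection (n : ℕ) (s : ℕ → ℕ) (T : STree)
    (hT : IsSDecreasingTree n s T) :
    IsTreeInvSet n s (pidownInv n s T) ∧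
    (∀ T' : STree, IsSDecreasingTree n s T' →
      treeInv n s T' = pidownInv n s T →
      TamariProp n s T' ∧ sWeakLE n s T' T ∧
      pidownInv n s T' = treeInv n s T') ∧
    (TamariProp n s T → pidownInv n s T = treeInv n s T) := by
  constructor
  · refine ⟨⟨?_, ?_⟩, ?_, ?_⟩
    · intro y x
      by_cases h : x < y
      · exact le_trans (pidown_le le_rfl h) (treeInv_le_s hT y x)
      · rw [pidown_zero h]; omega
    · intro y x h
      by_cases hxy : x < y
      · have h0 : treeInv n s T y x = 0 := if_neg (fun hh => h hh)
        have := pidown_le (n := n) (s := s) (T := T) (le_refl x) hxy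
        omega
      · exact pidown_zero hxy
    · intro a b c hab hbc
      obtain ⟨b₀, hab₀, hb₀c, he⟩ := pidown_spec (n := n) (s := s) (T := T) (hab.trans hbc)
      by_cases hbb : b ≤ b₀
      · right; rw [he]; exact pidown_le hbb hb₀c
      · have hb₀b : b₀ < b := by omega
        by_cases hz : treeInv n s T b b₀ = 0
        · left
          have := pidown_le (n := n) (s := s) (T := T) hab₀ hb₀b
          omega
        · right
          rcases treeInv_trans hT b₀ b c hb₀b hbc with h | h
          · exact absurd h hz
          · rw [he]
            exact le_trans (pidown_le le_rfl hbc) h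
    · intro a b c hab hbc
      right
      exact pidown_mono hab.le hbc
  constructor
  · intro T' _ hEq
    refine ⟨?_, ?_, ?_⟩
    · intro a b c hab hbc
      rw [hEq]
      exact pidown_mono hab.le hbc
    · intro y x
      rw [show treeInv n s T' y x = pidownInv n s T y x from congrFun (congrFun hEq y) x]
      by_cases h : x < y
      · exact pidown_le le_rfl h
      · rw [pidown_zero h]; omega
    · funext c a
      by_cases h : a < c
      · apply le_antisymm (pidown_le le_rfl h)
        obtain ⟨b, hab, hbc, he⟩ := pidown_spec (n := n) (s := s) (T := T') h
        rw [he, hEq]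
        exact pidown_mono hab hbc
      · rw [pidown_zero h, hEq, pidown_zero h]
  · intro hTam
    funext c a
    by_cases h : a < c
    · apply le_antisymm (pidown_le le_rfl h)
      obtain ⟨b, hab, hbc, he⟩ := pidown_spec (n := n) (s := s) (T := T) h
      rw [he]
      rcases eq_or_lt_of_le hab with he' | hlt
      · subst he'; exact le_rfl
      · exact hTam a b c hlt hbc
    · rw [pidown_zero h]
      exact (if_neg (fun hh => h hh.2.1)).symm
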